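/- Every common eigenvector of the commuting multiplication matrices A_1, ..., A_n with eigenvalue tuple (λ_1, ..., λ_n) is a scalar multiple of the monomial vector v(λ) = (λ^β)_{β∈I}, where λ = (λ_1, ..., λ_n); in particular its coordinate indexed by β = 0 is nonzero. -/

import Mathlib

open Finset Matrix

/-- Total degree of a multi-index. -/
def mdeg {n : ℕ} (α : Fin n → ℕ) : ℕ := ∑ i, α i

/-- The set `I = {α ∈ ℤ₊ⁿ : |α| ≤ m}` of multi-indices of total degree at most `m`. -/
def Idx (n m : ℕ) : Finset (Fin n → ℕ) :=
  (Fintype.piFinset fun _ => Finset.range (m + 1)).filter fun α => mdeg α ≤ m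

/-- `I` is a lower set of multi-indices. -/
def IsLower {n : ℕ} (I : Finset (Fin n → ℕ)) : Prop :=
  ∀ β ∈ I, ∀ γ : Fin n → ℕ, (∀ i, γ i ≤ β i) → γ ∈ I

/-- `α` belongs to the border `J` of the lower set `I`. -/
def InBorder {n : ℕ} (I : Finset (Fin n → ℕ)) (α : Fin n → ℕ) : Prop :=
  α ∉ I ∧ ∃ β ∈ I, ∃ i : Fin n, α = β + Pi.single i 1

/-- The multiplication matrix `A_i`: its row indexed by `β ∈ I` is the standard basis
vector at `β + e_i` if `β + e_i ∈ I`, and is `(a_{β+e_i,γ})_{γ∈I}` otherwise. -/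
def multMat {K : Type*} [Field K] {n : ℕ} (I : Finset (Fin n → ℕ))
    (a : (Fin n → ℕ) → (Fin n → ℕ) → K) (i : Fin n) : Matrix ↥I ↥I K :=
  fun β γ =>
    if (β : Fin n → ℕ) + Pi.single i 1 ∈ I then
      (if (γ : Fin n → ℕ) = (β : Fin n → ℕ) + Pi.single i 1 then 1 else 0)
    else a ((β : Fin n → ℕ) + Pi.single i 1) γ

/-- The monomial vector `v(x) = (x^β)_{β ∈ I}`. -/
def monVec {K : Type*} [Field K] {n : ℕ} (I : Finset (Fin n → ℕ)) (x : Fin n → K) :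
    ↥I → K :=
  fun β => ∏ i, x i ^ (β : Fin n → ℕ) i

/-- `x` is a solution of the system (1): `x^α = Σ_{β∈I} a_{α,β} x^β` for all `|α| = m+1`. -/
def IsSol {K : Type*} [Field K] {n : ℕ} (m : ℕ)
    (a : (Fin n → ℕ) → (Fin n → ℕ) → K) (x : Fin n → K) : Prop :=
  ∀ α : Fin n → ℕ, mdeg α = m + 1 →
    ∏ i, x i ^ α i = ∑ β ∈ Idx n m, a α β * ∏ i, x i ^ β i

/-- `x` is a solution of the system for a general lower set `I` with border `J`. -/
def IsSolB {K : Type*} [Field K] {n : ℕ} (I : Finset (Fin n → ℕ))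
    (a : (Fin n → ℕ) → (Fin n → ℕ) → K) (x : Fin n → K) : Prop :=
  ∀ α : Fin n → ℕ, InBorder I α →
    ∏ i, x i ^ α i = ∑ β ∈ I, a α β * ∏ i, x i ^ β i

/-- A square matrix is diagonalizable (semisimple). -/
def Diagonalizable {K : Type*} [Field K] {ι : Type*} [Fintype ι] [DecidableEq ι]
    (A : Matrix ι ι K) : Prop :=
  ∃ P : Matrix ι ι K, IsUnit P.det ∧ (P⁻¹ * A * P).IsDiag

/-- The polynomial `P_α = x^α − Σ_{β∈I} a_{α,β} x^β`. -/
noncomputable def Pb {K : Type*} [Field K] {n : ℕ} (I : Finset (Fin n → ℕ))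
    (a : (Fin n → ℕ) → (Fin n → ℕ) → K) (α : Fin n → ℕ) : MvPolynomial (Fin n) K :=
  MvPolynomial.monomial (Finsupp.equivFunOnFinite.symm α) 1 -
    ∑ β ∈ I, MvPolynomial.C (a α β) * MvPolynomial.monomial (Finsupp.equivFunOnFinite.symm β) 1

/-- The ideal generated by the polynomials `P_α`, `α ∈ J`. -/
noncomputable def PIdeal {K : Type*} [Field K] {n : ℕ} (I : Finset (Fin n → ℕ))
    (a : (Fin n → ℕ) → (Fin n → ℕ) → K) : Ideal (MvPolynomial (Fin n) K) :=
  Ideal.span {p | ∃ α : Fin n → ℕ, InBorder I α ∧ p = Pb I a α}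

/-
Reading the eigenvalue equation `A_i v = λ_i v` at a row `β` with `β + e_i ∈ I` gives
`v_{β+e_i} = λ_i v_β`: such rows of `A_i` are standard basis vectors. Since `I` is a lower
set, every `β ∈ I` is reached from `0` by such steps inside `I`, so `v_β = λ^β v_0`. Hence
`v = v_0 · v(λ)`, and `v_0 ≠ 0` because `v ≠ 0`.
-/

lemma mem_Idx_iff {n m : ℕ} {β : Fin n → ℕ} : β ∈ Idx n m ↔ mdeg β ≤ m := by
  refine ⟨fun h => (Finset.mem_filter.mp h).2, fun h => Finset.mem_filter.mpr ⟨?_, h⟩⟩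
  refine Fintype.mem_piFinset.mpr fun i => Finset.mem_range.mpr ?_
  have : β i ≤ mdeg β := Finset.single_le_sum (fun j _ => Nat.zero_le (β j)) (Finset.mem_univ i)
  omega

lemma mdeg_mono {n : ℕ} {β γ : Fin n → ℕ} (h : ∀ i, γ i ≤ β i) : mdeg γ ≤ mdeg β :=
  Finset.sum_le_sum fun i _ => h i

lemma isLower_Idx (n m : ℕ) : IsLower (Idx n m) := fun _ hβ _ hγ =>
  mem_Idx_iff.mpr ((mdeg_mono hγ).trans (mem_Idx_iff.mp hβ))

lemma prod_pow_add_single {ι M : Type*} [Fintype ι] [DecidableEq ι] [CommMonoid M]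
    (x : ι → M) (β : ι → ℕ) (i : ι) :
    ∏ j, x j ^ (β + Pi.single i 1 : ι → ℕ) j = (∏ j, x j ^ β j) * x i := by
  simp only [Pi.add_apply, pow_add, Finset.prod_mul_distrib, Pi.single_apply, pow_ite, pow_one,
    pow_zero, Finset.prod_ite_eq', Finset.mem_univ, if_true]

lemma multMat_mulVec_of_add_single_mem {K : Type*} [Field K] {n : ℕ}
    {I : Finset (Fin n → ℕ)} (a : (Fin n → ℕ) → (Fin n → ℕ) → K) (v : ↥I → K) {i : Fin n}
    {β : Fin n → ℕ} (hβ : β ∈ I) (hβi : β + Pi.single i 1 ∈ I) :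
    (multMat I a i *ᵥ v) ⟨β, hβ⟩ = v ⟨β + Pi.single i 1, hβi⟩ := by
  have hrow : multMat I a i ⟨β, hβ⟩ = Pi.single ⟨β + Pi.single i 1, hβi⟩ 1 := by
    ext γ
    simp only [multMat, if_pos hβi, Pi.single_apply, Subtype.ext_iff]
  rw [mulVec, hrow, single_one_dotProduct]

lemma apply_add_single_of_mulVec_eq_smul {K : Type*} [Field K] {n : ℕ}
    {I : Finset (Fin n → ℕ)} {a : (Fin n → ℕ) → (Fin n → ℕ) → K} {lam : Fin n → K}
    {v : ↥I → K} (heig : ∀ i, multMat I a i *ᵥ v = lam i • v) {i : Fin n}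
    {β : Fin n → ℕ} (hβ : β ∈ I) (hβi : β + Pi.single i 1 ∈ I) :
    v ⟨β + Pi.single i 1, hβi⟩ = lam i * v ⟨β, hβ⟩ := by
  rw [← multMat_mulVec_of_add_single_mem a v hβ hβi, heig, Pi.smul_apply, smul_eq_mul]

lemma sub_single_add_single {ι : Type*} [DecidableEq ι] {β : ι → ℕ} {i : ι} (hi : 0 < β i) :
    β - Pi.single i 1 + Pi.single i 1 = β := by
  ext j
  by_cases hj : j = i
  · subst hj; simp; omega
  · simp [hj]

lemma eq_monomial_mul_apply_zero_of_mulVec_eq_smul {K : Type*} [Field K] {n : ℕ}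
    {I : Finset (Fin n → ℕ)} (hI : IsLower I) (h0 : 0 ∈ I)
    {a : (Fin n → ℕ) → (Fin n → ℕ) → K} {lam : Fin n → K} {v : ↥I → K}
    (heig : ∀ i, multMat I a i *ᵥ v = lam i • v) (β : Fin n → ℕ) (hβ : β ∈ I) :
    v ⟨β, hβ⟩ = (∏ i, lam i ^ β i) * v ⟨0, h0⟩ := by
  induction β using WellFoundedLT.induction with
  | _ β ih =>
  by_cases hβ0 : β = 0
  · subst hβ0; simp
  obtain ⟨i, hi⟩ := Function.ne_iff.mp hβ0
  set γ := β - Pi.single i 1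
  have hγβ : γ + Pi.single i 1 = β := sub_single_add_single (Nat.pos_of_ne_zero hi)
  have hγ : γ ∈ I := hI β hβ γ fun j => tsub_le_self
  have hlt : γ < β := hγβ ▸ lt_add_of_pos_right γ (Pi.lt_def.mpr ⟨fun _ => Nat.zero_le _, i, by simp⟩)
  clear_value γ
  subst hγβ
  rw [apply_add_single_of_mulVec_eq_smul heig hγ hβ, ih γ hlt hγ, prod_pow_add_single lam]
  ring

/-- Every common eigenvector of the commuting multiplication matrices with eigenvalue
tuple `λ` is a scalar multiple of the monomial vector `v(λ)`; in particular its
coordinate indexed by `β = 0` is nonzero. -/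
theorem stmt_7 {K : Type*} [Field K] {n m : ℕ}
    (a : (Fin n → ℕ) → (Fin n → ℕ) → K)
    (lam : Fin n → K) (v : ↥(Idx n m) → K) (hv : v ≠ 0)
    (heig : ∀ i, multMat (Idx n m) a i *ᵥ v = lam i • v) :
    ∃ c : K, v = c • monVec (Idx n m) lam ∧
      v ⟨0, by
        unfold Idx mdeg
        rw [Finset.mem_filter]
        exact ⟨Fintype.mem_piFinset.2 fun _ => Finset.mem_range.2 (Nat.succ_pos m), by simp⟩⟩ ≠ 0 := by
  have h0 : (0 : Fin n → ℕ) ∈ Idx n m := mem_Idx_iff.mpr (by simp [mdeg])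
  have hv_eq : v = v ⟨0, h0⟩ • monVec (Idx n m) lam := funext fun ⟨β, hβ⟩ => by
    rw [eq_monomial_mul_apply_zero_of_mulVec_eq_smul (isLower_Idx n m) h0 heig β hβ, mul_comm]
    rfl
  refine ⟨_, hv_eq, fun hzero => hv ?_⟩
  rw [hv_eq, hzero, zero_smul]
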